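/- For c ≥ 3, the double occurrence word v1 vc v2 v1 v3 v2 v4 v3 ... v_{c-1} v_{c-2} vc v_{c-1} has interlacement graph equal to the cycle C_c with vertices v1, ..., vc in cyclic order. -/

import Mathlib

/-! Write the word as `0 (c-1)` followed by the ladder `1 0 2 1 ⋯ (c-1) (c-2)`. In the ladder
the two occurrences of a letter are separated only by its neighbours, so restricted to letters
`a < b` it reads `a b a b` (possibly missing an end letter) when `b = a + 1`, and has all `a`s
before all `b`s otherwise. The prefix `0 (c-1)` completes the consecutive pairs and makes `0` and
`c - 1` interlaced, which closes the cycle. -/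

open SimpleGraph

/-- Two letters are interlaced in a word if their occurrences alternate. -/
def Interlaced {α : Type} [DecidableEq α] (W : List α) (a b : α) : Prop :=
  W.filter (fun x => x == a || x == b) = [a, b, a, b] ∨
  W.filter (fun x => x == a || x == b) = [b, a, b, a]

/-- The interlacement graph of a word. -/
def interlacementGraph {α : Type} [DecidableEq α] (W : List α) : SimpleGraph α where
  Adj a b := a ≠ b ∧ (Interlaced W a b ∨ Interlaced W b a)
  symm := ⟨fun a b h => ⟨h.1.symm, h.2.symm⟩⟩
  loopless := ⟨fun a h => h.1 rfl⟩

/-- A double occurrence word: each letter of the alphabet occurs exactly twice. -/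
def IsDOW {α : Type} [DecidableEq α] (W : List α) : Prop := ∀ a : α, W.count a = 2

/-- A circle graph: a graph isomorphic to the interlacement graph of a
double occurrence word. -/
def IsCircleGraph {V : Type} (G : SimpleGraph V) : Prop :=
  ∃ (n : ℕ) (W : List (Fin n)), IsDOW W ∧ Nonempty (G ≃g interlacementGraph W)

/-- Local complementation at a vertex `v`: toggle adjacency inside `N(v)`. -/
def localComplement {V : Type} (G : SimpleGraph V) (v : V) : SimpleGraph V where
  Adj x y := x ≠ y ∧ ((G.Adj v x ∧ G.Adj v y ∧ ¬ G.Adj x y) ∨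
    (¬ (G.Adj v x ∧ G.Adj v y) ∧ G.Adj x y))
  symm := by
    refine ⟨?_⟩
    rintro x y ⟨hxy, h | h⟩
    · exact ⟨hxy.symm, Or.inl ⟨h.2.1, h.1, fun hc => h.2.2 hc.symm⟩⟩
    · exact ⟨hxy.symm, Or.inr ⟨fun hc => h.1 ⟨hc.2, hc.1⟩, h.2.symm⟩⟩
  loopless := ⟨fun x h => h.1 rfl⟩

/-- A split `(V1, X1; V2, X2)` of a graph. -/
def IsSplit {V : Type} (G : SimpleGraph V) (V1 X1 V2 X2 : Set V) : Prop :=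
  V1 ∪ V2 = Set.univ ∧ Disjoint V1 V2 ∧ 2 ≤ V1.encard ∧ 2 ≤ V2.encard ∧
  X1 ⊆ V1 ∧ X2 ⊆ V2 ∧ ∀ x ∈ V1, ∀ y ∈ V2, (G.Adj x y ↔ x ∈ X1 ∧ y ∈ X2)

/-- A graph has a split. -/
def HasSplit {V : Type} (G : SimpleGraph V) : Prop :=
  ∃ V1 X1 V2 X2, IsSplit G V1 X1 V2 X2

/-- Twin vertices: same neighbours outside `{u, v}`. -/
def IsTwinPair {V : Type} (G : SimpleGraph V) (u v : V) : Prop :=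
  u ≠ v ∧ G.neighborSet u \ {v} = G.neighborSet v \ {u}

/-- Adjacent twins. -/
def AdjacentTwins {V : Type} (G : SimpleGraph V) (u v : V) : Prop :=
  G.Adj u v ∧ G.neighborSet u \ {v} = G.neighborSet v \ {u}

/-- Nonadjacent twins. -/
def NonadjacentTwins {V : Type} (G : SimpleGraph V) (u v : V) : Prop :=
  u ≠ v ∧ ¬ G.Adj u v ∧ G.neighborSet u = G.neighborSet v

/-- Delete a vertex: keep the vertex set, remove all edges at `v`. -/
def deleteVertex {V : Type} (G : SimpleGraph V) (v : V) : SimpleGraph V where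
  Adj x y := G.Adj x y ∧ x ≠ v ∧ y ≠ v
  symm := ⟨fun x y h => ⟨h.1.symm, h.2.2, h.2.1⟩⟩
  loopless := ⟨fun x h => G.loopless.1 x h.1⟩

/-- `v` is a cutpoint of the connected graph `G`. -/
def IsCutpoint {V : Type} (G : SimpleGraph V) (v : V) : Prop :=
  G.Connected ∧ ∃ x y : V, x ≠ v ∧ y ≠ v ∧ ¬ (deleteVertex G v).Reachable x y

/-- Cyclic equivalence of words: generated by rotations and reversals. -/
inductive CyclicEquiv {β : Type} : List β → List β → Prop
  | refl (l : List β) : CyclicEquiv l l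
  | rot (l₁ l₂ : List β) : CyclicEquiv (l₁ ++ l₂) (l₂ ++ l₁)
  | rev (l : List β) : CyclicEquiv l l.reverse
  | symm {l₁ l₂ : List β} : CyclicEquiv l₁ l₂ → CyclicEquiv l₂ l₁
  | trans {l₁ l₂ l₃ : List β} : CyclicEquiv l₁ l₂ → CyclicEquiv l₂ l₃ → CyclicEquiv l₁ l₃

/-- `G` is 3-connected: more than 3 vertices, and removing fewer than 3
vertices leaves it connected. -/
def ThreeConnected {V : Type} [Fintype V] (G : SimpleGraph V) : Prop :=
  3 < Fintype.card V ∧ ∀ K : Set V, K.ncard < 3 → (G.induce (Kᶜ : Set V)).Connected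

/-- The disjoint union of two graphs, joined by a single edge from `a` to `b`. -/
def joinedByEdge {V₁ V₂ : Type} (G₁ : SimpleGraph V₁) (G₂ : SimpleGraph V₂)
    (a : V₁) (b : V₂) : SimpleGraph (V₁ ⊕ V₂) where
  Adj x y :=
    Sum.elim (fun u => Sum.elim (fun w => G₁.Adj u w) (fun w => u = a ∧ w = b) y)
             (fun u => Sum.elim (fun w => u = b ∧ w = a) (fun w => G₂.Adj u w) y) x
  symm := by
    refine ⟨?_⟩
    rintro (u | u) (w | w) h
    · exact h.symm
    · exact ⟨h.2, h.1⟩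
    · exact ⟨h.2, h.1⟩
    · exact h.symm
  loopless := by
    refine ⟨?_⟩
    rintro (u | u) h
    · exact G₁.loopless.1 u h
    · exact G₂.loopless.1 u h

/-- The standard word whose interlacement graph is the cycle `C_c`. -/
def cycleWord (c : ℕ) : List ℕ :=
  0 :: (c - 1) :: (List.range (c - 1)).flatMap (fun k => [k + 1, k])

/-- The cycle `C_c` on vertices `0, ..., c-1` (all other naturals isolated). -/
def cycleGraphOn (c : ℕ) : SimpleGraph ℕ :=
  SimpleGraph.fromRel (fun i j => i < c ∧ j < c ∧ (i + 1) % c = j)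

lemma interlaced_comm {α : Type} [DecidableEq α] (W : List α) (a b : α) :
    Interlaced W a b ↔ Interlaced W b a := by
  have hswap : W.filter (fun x => x == b || x == a) = W.filter (fun x => x == a || x == b) :=
    List.filter_congr fun x _ => Bool.or_comm _ _
  rw [Interlaced, Interlaced, hswap]
  exact or_comm

lemma interlacementGraph_adj {α : Type} [DecidableEq α] (W : List α) (a b : α) :
    (interlacementGraph W).Adj a b ↔ a ≠ b ∧ Interlaced W a b := by
  change a ≠ b ∧ (Interlaced W a b ∨ Interlaced W b a) ↔ _
  rw [← interlaced_comm W a b, or_self]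

lemma Interlaced.mem_right {α : Type} [DecidableEq α] {W : List α} {a b : α}
    (h : Interlaced W a b) : b ∈ W := by
  have hb : b ∈ W.filter (fun x => x == a || x == b) := by
    rcases h with h | h <;> rw [h] <;> simp
  exact List.mem_of_mem_filter hb

def ladder (n : ℕ) : List ℕ := (List.range n).flatMap fun k => [k + 1, k]

lemma ladder_succ (n : ℕ) : ladder (n + 1) = ladder n ++ [n + 1, n] := by
  simp [ladder, List.range_succ]

lemma filter_ladder_of_succ_lt {a b : ℕ} (hab : a + 1 < b) (n : ℕ) :
    (ladder n).filter (fun x => x == a || x == b) =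
      (if 1 ≤ a ∧ a ≤ n then [a] else []) ++ (if a < n then [a] else []) ++
      (if b ≤ n then [b] else []) ++ (if b < n then [b] else []) := by
  induction n with
  | zero => simp [ladder]; omega
  | succ n ih =>
    rw [ladder_succ, List.filter_append, ih]
    simp only [List.filter_cons, List.filter_nil, beq_iff_eq, Bool.or_eq_true]
    grind

lemma filter_ladder_succ_right (a n : ℕ) :
    (ladder n).filter (fun x => x == a || x == a + 1) =
      (if 1 ≤ a ∧ a ≤ n then [a] else []) ++ (if a < n then [a + 1, a] else []) ++
      (if a + 1 < n then [a + 1] else []) := by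
  induction n with
  | zero => simp [ladder]; omega
  | succ n ih =>
    rw [ladder_succ, List.filter_append, ih]
    simp only [List.filter_cons, List.filter_nil, beq_iff_eq, Bool.or_eq_true]
    grind

lemma cycleWord_eq_cons_ladder (c : ℕ) : cycleWord c = 0 :: (c - 1) :: ladder (c - 1) := rfl

lemma lt_of_mem_cycleWord {c x : ℕ} (hc : 0 < c) (hx : x ∈ cycleWord c) : x < c := by
  simp only [cycleWord, List.mem_cons, List.mem_flatMap, List.mem_range,
    List.not_mem_nil, or_false] at hx
  omega

lemma interlaced_cycleWord_iff {c a b : ℕ} (hc : 3 ≤ c) (hab : a < b) (hbc : b < c) :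
    Interlaced (cycleWord c) a b ↔ b = a + 1 ∨ (a = 0 ∧ b = c - 1) := by
  rw [Interlaced, cycleWord_eq_cons_ladder]
  rcases Nat.lt_or_ge (a + 1) b with hfar | hnext
  · simp only [List.filter_cons, filter_ladder_of_succ_lt hfar, beq_iff_eq, Bool.or_eq_true]
    grind
  · obtain rfl : b = a + 1 := by omega
    simp only [List.filter_cons, filter_ladder_succ_right, beq_iff_eq, Bool.or_eq_true]
    grind

lemma cycleGraphOn_adj_of_lt {c a b : ℕ} (hab : a < b) :
    (cycleGraphOn c).Adj a b ↔ b < c ∧ (b = a + 1 ∨ (a = 0 ∧ b = c - 1)) := by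
  simp only [cycleGraphOn, fromRel_adj]
  constructor
  · rintro ⟨-, ⟨-, hb, h⟩ | ⟨hb, -, h⟩⟩
    · rw [Nat.mod_eq_of_lt (by omega)] at h
      exact ⟨hb, Or.inl h.symm⟩
    · obtain hbc | hbc := (show b + 1 ≤ c from hb).lt_or_eq
      · rw [Nat.mod_eq_of_lt hbc] at h
        omega
      · rw [hbc, Nat.mod_self] at h
        omega
  · rintro ⟨hb, rfl | ⟨rfl, rfl⟩⟩
    · exact ⟨hab.ne, Or.inl ⟨by omega, hb, Nat.mod_eq_of_lt hb⟩⟩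
    · refine ⟨hab.ne, Or.inr ⟨hb, by omega, ?_⟩⟩
      rw [Nat.sub_add_cancel (by omega), Nat.mod_self]

lemma interlacementGraph_cycleWord_adj_of_lt {c a b : ℕ} (hc : 3 ≤ c) (hab : a < b) :
    (interlacementGraph (cycleWord c)).Adj a b ↔ (cycleGraphOn c).Adj a b := by
  rw [interlacementGraph_adj, cycleGraphOn_adj_of_lt hab]
  by_cases hbc : b < c
  · rw [interlaced_cycleWord_iff hc hab hbc]
    simp [hab.ne, hbc]
  · have hnot : ¬ Interlaced (cycleWord c) a b :=
      fun h => hbc (lt_of_mem_cycleWord (by omega) h.mem_right)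
    simp [hnot, hbc]

/-- For `c ≥ 3` the word `v₁ v_c v₂ v₁ v₃ v₂ ... v_{c-1} v_{c-2} v_c v_{c-1}`
has interlacement graph the cycle `C_c`. -/
theorem stmt12 (c : ℕ) (hc : 3 ≤ c) :
    interlacementGraph (cycleWord c) = cycleGraphOn c := by
  ext a b
  rcases lt_trichotomy a b with hab | rfl | hab
  · exact interlacementGraph_cycleWord_adj_of_lt hc hab
  · simp
  · rw [adj_comm, (cycleGraphOn c).adj_comm]
    exact interlacementGraph_cycleWord_adj_of_lt hc hab
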